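/- Let γ = (c_1,…,c_n) be a clan that avoids the seven patterns (1,+,−,1), (1,−,+,1), (1,2,1,2), (1,+,2,2,1), (1,−,2,2,1), (1,2,2,+,1), (1,2,2,−,1) and contains at least one natural number entry. Then there exists a pair (i,j) of γ such that every entry c_k with i < k < j is a sign, and all such signs are equal (all + or all −). -/

import Mathlib

/-- An entry of a clan: a plus sign, a minus sign, or a natural number. -/
inductive CEntry : Type where
  | plus : CEntry
  | minus : CEntry
  | num : ℕ → CEntry
deriving DecidableEq

/-- Whether an entry is a natural number. -/
def CEntry.isNum : CEntry → Bool
  | .num _ => true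
  | _ => false

/-- Whether an entry is a sign (`+` or `−`). -/
def CEntry.isSign : CEntry → Bool
  | .num _ => false
  | _ => true

/-- A clan of signature `(p, q)`: a sequence of `n = p + q` symbols, each `+`, `−`, or a
natural number, such that every natural number occurring in the sequence occurs exactly
twice, and the number of `+` entries plus the number of pairs of equal numbers is `p`. -/
structure Clan (n p q : ℕ) : Type where
  c : Fin n → CEntry
  total : n = p + q
  twice : ∀ a : ℕ, (Finset.univ.filter fun i => c i = CEntry.num a).card = 0 ∨
      (Finset.univ.filter fun i => c i = CEntry.num a).card = 2
  signature : (Finset.univ.filter fun i => c i = CEntry.plus).card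
      + (Finset.univ.filter fun i => (c i).isNum = true).card / 2 = p

namespace Clan

variable {n p q : ℕ}

/-- `(i, j)` is a pair of the clan `γ`: `i < j` and `c i = c j` is a natural number. -/
def IsPair (γ : Clan n p q) (i j : Fin n) : Prop :=
  i < j ∧ γ.c i = γ.c j ∧ (γ.c i).isNum = true

instance (γ : Clan n p q) (i j : Fin n) : Decidable (γ.IsPair i j) := by
  unfold IsPair; infer_instance

/-- The finset of all pairs of the clan `γ`. -/
def pairs (γ : Clan n p q) : Finset (Fin n × Fin n) :=
  Finset.univ.filter fun x => γ.IsPair x.1 x.2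

/-- The contribution `j − i − #{pairs (s,t) of γ with s < i < t < j}` of a pair `(i, j)`
to the dimension of the orbit parametrized by `γ`. -/
def summand (γ : Clan n p q) (x : Fin n × Fin n) : ℕ :=
  (x.2 : ℕ) - (x.1 : ℕ) -
    (γ.pairs.filter fun y => y.1 < x.1 ∧ x.1 < y.2 ∧ y.2 < x.2).card

/-- `d_{p,q} = (p(p−1) + q(q−1))/2`, the dimension of the closed orbits. -/
def dpq (p q : ℕ) : ℕ := (p * (p - 1) + q * (q - 1)) / 2

/-- The dimension of the `GL_p × GL_q`-orbit on the flag variety parametrized by `γ`. -/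
def D (γ : Clan n p q) : ℕ := dpq p q + ∑ x ∈ γ.pairs, γ.summand x

/-- `γ` includes the pattern `(1, +, −, 1)`. -/
def Includes1pm1 (γ : Clan n p q) : Prop :=
  ∃ i k l j : Fin n, i < k ∧ k < l ∧ l < j ∧
    γ.c k = CEntry.plus ∧ γ.c l = CEntry.minus ∧ γ.IsPair i j

/-- `γ` includes the pattern `(1, −, +, 1)`. -/
def Includes1mp1 (γ : Clan n p q) : Prop :=
  ∃ i k l j : Fin n, i < k ∧ k < l ∧ l < j ∧
    γ.c k = CEntry.minus ∧ γ.c l = CEntry.plus ∧ γ.IsPair i j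

/-- `γ` includes the pattern `(1, 2, 1, 2)`. -/
def Includes1212 (γ : Clan n p q) : Prop :=
  ∃ i s j t : Fin n, i < s ∧ s < j ∧ j < t ∧
    γ.IsPair i j ∧ γ.IsPair s t ∧ γ.c i ≠ γ.c s

/-- `γ` includes the pattern `(1, +, 2, 2, 1)`. -/
def Includes1p221 (γ : Clan n p q) : Prop :=
  ∃ i k s t j : Fin n, i < k ∧ k < s ∧ s < t ∧ t < j ∧
    γ.c k = CEntry.plus ∧ γ.IsPair i j ∧ γ.IsPair s t ∧ γ.c i ≠ γ.c s

/-- `γ` includes the pattern `(1, −, 2, 2, 1)`. -/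
def Includes1m221 (γ : Clan n p q) : Prop :=
  ∃ i k s t j : Fin n, i < k ∧ k < s ∧ s < t ∧ t < j ∧
    γ.c k = CEntry.minus ∧ γ.IsPair i j ∧ γ.IsPair s t ∧ γ.c i ≠ γ.c s

/-- `γ` includes the pattern `(1, 2, 2, +, 1)`. -/
def Includes122p1 (γ : Clan n p q) : Prop :=
  ∃ i s t k j : Fin n, i < s ∧ s < t ∧ t < k ∧ k < j ∧
    γ.c k = CEntry.plus ∧ γ.IsPair i j ∧ γ.IsPair s t ∧ γ.c i ≠ γ.c s

/-- `γ` includes the pattern `(1, 2, 2, −, 1)`. -/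
def Includes122m1 (γ : Clan n p q) : Prop :=
  ∃ i s t k j : Fin n, i < s ∧ s < t ∧ t < k ∧ k < j ∧
    γ.c k = CEntry.minus ∧ γ.IsPair i j ∧ γ.IsPair s t ∧ γ.c i ≠ γ.c s

/-- `γ` avoids the seven patterns `(1,+,−,1)`, `(1,−,+,1)`, `(1,2,1,2)`, `(1,+,2,2,1)`,
`(1,−,2,2,1)`, `(1,2,2,+,1)`, `(1,2,2,−,1)`. -/
def AvoidsSeven (γ : Clan n p q) : Prop :=
  ¬ γ.Includes1pm1 ∧ ¬ γ.Includes1mp1 ∧ ¬ γ.Includes1212 ∧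
    ¬ γ.Includes1p221 ∧ ¬ γ.Includes1m221 ∧ ¬ γ.Includes122p1 ∧ ¬ γ.Includes122m1

end Clan

/-- The move replacing a pair of opposite signs of `γ` in positions `i < j` by a pair of
equal numbers not occurring in `γ`, yielding `γ'`. -/
def ReplaceMove {n p q : ℕ} (γ γ' : Clan n p q) : Prop :=
  ∃ i j : Fin n, i < j ∧
    ((γ.c i = CEntry.plus ∧ γ.c j = CEntry.minus) ∨
      (γ.c i = CEntry.minus ∧ γ.c j = CEntry.plus)) ∧
    (∃ a : ℕ, (∀ k, γ.c k ≠ CEntry.num a) ∧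
      γ'.c i = CEntry.num a ∧ γ'.c j = CEntry.num a) ∧
    ∀ k, k ≠ i → k ≠ j → γ'.c k = γ.c k

/-! Choose a pair `(i, j)` with no pair nested strictly inside it. A number between `i` and `j`
would have its partner either inside (a nested pair) or outside (the pattern `(1,2,1,2)`), and
two different signs between them would form `(1,+,−,1)` or `(1,−,+,1)`. -/

namespace CEntry

lemma eq_plus_or_eq_minus {e : CEntry} (he : e.isSign = true) : e = plus ∨ e = minus := by
  cases e <;> simp_all [isSign]

lemma isSign_eq_not_isNum (e : CEntry) : e.isSign = !e.isNum := by
  cases e <;> rfl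

end CEntry

namespace Clan

variable {n p q : ℕ} (γ : Clan n p q)

lemma card_filter_c_eq {k : Fin n} (hk : (γ.c k).isNum = true) :
    (Finset.univ.filter fun i => γ.c i = γ.c k).card = 2 := by
  obtain ⟨a, ha⟩ : ∃ a, γ.c k = CEntry.num a := by
    cases h : γ.c k <;> simp_all [CEntry.isNum]
  rw [ha]
  exact (γ.twice a).resolve_left (Finset.card_ne_zero.mpr ⟨k, by simp [ha]⟩)

lemma exists_ne_c_eq {k : Fin n} (hk : (γ.c k).isNum = true) :
    ∃ k', k' ≠ k ∧ γ.c k' = γ.c k := by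
  obtain ⟨k', hk', hne⟩ := Finset.exists_mem_ne (by rw [γ.card_filter_c_eq hk]; norm_num) k
  exact ⟨k', hne, (Finset.mem_filter.mp hk').2⟩

lemma isPair_or_isPair {k k' : Fin n} (hne : k ≠ k') (heq : γ.c k = γ.c k')
    (hk : (γ.c k).isNum = true) : γ.IsPair k k' ∨ γ.IsPair k' k := by
  rcases hne.lt_or_gt with hlt | hlt
  · exact Or.inl ⟨hlt, heq, hk⟩
  · exact Or.inr ⟨hlt, heq.symm, heq ▸ hk⟩

lemma exists_isPair {k : Fin n} (hk : (γ.c k).isNum = true) : ∃ i j, γ.IsPair i j := by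
  obtain ⟨k', hne, heq⟩ := γ.exists_ne_c_eq hk
  rcases γ.isPair_or_isPair hne.symm heq.symm hk with h | h
  exacts [⟨_, _, h⟩, ⟨_, _, h⟩]

variable {γ}

lemma IsPair.eq_or_eq_of_c_eq {i j m : Fin n} (hij : γ.IsPair i j) (hm : γ.c m = γ.c i) :
    m = i ∨ m = j := by
  obtain ⟨x, y, -, hxy⟩ := Finset.card_eq_two.mp (γ.card_filter_c_eq hij.2.2)
  have mem : ∀ k, γ.c k = γ.c i → k = x ∨ k = y := fun k hk => by
    simpa [hxy] using (Finset.mem_filter.mpr ⟨Finset.mem_univ k, hk⟩ :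
      k ∈ Finset.univ.filter fun k => γ.c k = γ.c i)
  have := hij.1.ne
  rcases mem i rfl with rfl | rfl <;> rcases mem j hij.2.1.symm with rfl | rfl <;>
    rcases mem m hm with rfl | rfl <;> simp_all

variable (γ) in
lemma exists_isPair_no_nested_pair {i₀ j₀ : Fin n} (h₀ : γ.IsPair i₀ j₀) :
    ∃ i j, γ.IsPair i j ∧ ∀ s t, γ.IsPair s t → i < s → j ≤ t := by
  obtain ⟨⟨i, j⟩, hij, hmin⟩ := (measure fun x : Fin n × Fin n => (x.2 : ℕ) - x.1).wf.has_min
    {x | γ.IsPair x.1 x.2} ⟨(i₀, j₀), h₀⟩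
  refine ⟨i, j, hij, fun s t hst hs => not_lt.mp fun ht => hmin (s, t) hst ?_⟩
  change (t : ℕ) - s < (j : ℕ) - i
  have := hst.1
  omega

lemma IsPair.isSign_of_no_nested_pair (h1212 : ¬γ.Includes1212) {i j : Fin n}
    (hij : γ.IsPair i j) (hnest : ∀ s t, γ.IsPair s t → i < s → j ≤ t) {k : Fin n}
    (hik : i < k) (hkj : k < j) : (γ.c k).isSign = true := by
  rw [CEntry.isSign_eq_not_isNum, Bool.not_eq_true']
  by_contra! hk
  replace hk : (γ.c k).isNum = true := by simpa using hk
  obtain ⟨k', hne, heq⟩ := γ.exists_ne_c_eq hk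
  have hki : γ.c i ≠ γ.c k := fun h => by
    rcases hij.eq_or_eq_of_c_eq h.symm with rfl | rfl <;> omega
  rcases lt_trichotomy k' i with hk' | rfl | hk'
  · exact h1212 ⟨k', i, k, j, hk', hik, hkj, ⟨hk'.trans hik, heq, heq ▸ hk⟩, hij,
      fun h => hki (h.symm.trans heq)⟩
  · exact hki heq
  rcases lt_trichotomy k' j with hk'' | rfl | hk''
  · rcases γ.isPair_or_isPair hne.symm heq.symm hk with h | h
    · exact absurd (hnest k k' h hik) (not_le.mpr hk'')
    · exact absurd (hnest k' k h hk') (not_le.mpr hkj)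
  · exact hki (hij.2.1.trans heq)
  · exact h1212 ⟨i, k, j, k', hik, hkj, hk'', hij, ⟨hkj.trans hk'', heq.symm, hk⟩, hki⟩

lemma IsPair.c_eq_of_lt (h1pm1 : ¬γ.Includes1pm1) (h1mp1 : ¬γ.Includes1mp1) {i j k l : Fin n}
    (hij : γ.IsPair i j) (hik : i < k) (hkl : k < l) (hlj : l < j)
    (hk : (γ.c k).isSign = true) (hl : (γ.c l).isSign = true) : γ.c k = γ.c l := by
  rcases CEntry.eq_plus_or_eq_minus hk with hk | hk <;>
    rcases CEntry.eq_plus_or_eq_minus hl with hl | hl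
  · rw [hk, hl]
  · exact (h1pm1 ⟨i, k, l, j, hik, hkl, hlj, hk, hl, hij⟩).elim
  · exact (h1mp1 ⟨i, k, l, j, hik, hkl, hlj, hk, hl, hij⟩).elim
  · rw [hk, hl]

end Clan

/-- A clan avoiding the seven patterns and containing at least one
natural number entry has a pair `(i, j)` such that every entry strictly between `i`
and `j` is a sign and all these signs are equal. -/
theorem exists_innermost_pair {n p q : ℕ} (γ : Clan n p q)
    (h : γ.AvoidsSeven) (hnum : ∃ k : Fin n, (γ.c k).isNum = true) :
    ∃ i j : Fin n, γ.IsPair i j ∧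
      (∀ k : Fin n, i < k → k < j → (γ.c k).isSign = true) ∧
      (∀ k l : Fin n, i < k → k < j → i < l → l < j → γ.c k = γ.c l) := by
  obtain ⟨h1pm1, h1mp1, h1212, -⟩ := h
  obtain ⟨k, hk⟩ := hnum
  obtain ⟨i₀, j₀, h₀⟩ := γ.exists_isPair hk
  obtain ⟨i, j, hij, hnest⟩ := γ.exists_isPair_no_nested_pair h₀
  have hsign : ∀ k, i < k → k < j → (γ.c k).isSign = true := fun _ =>
    hij.isSign_of_no_nested_pair h1212 hnest
  refine ⟨i, j, hij, hsign, fun k l hik hkj hil hlj => ?_⟩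
  rcases lt_trichotomy k l with hkl | rfl | hkl
  · exact hij.c_eq_of_lt h1pm1 h1mp1 hik hkl hlj (hsign k hik hkj) (hsign l hil hlj)
  · rfl
  · exact (hij.c_eq_of_lt h1pm1 h1mp1 hil hkl hkj (hsign l hil hlj) (hsign k hik hkj)).symm
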